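/- arXiv:2410.23811 — 2 statements merged into one kernel-verified Lean document; each statement's English description precedes it below -/
import Mathlib

section
/- Let L be a positive integer, let c ≥ 1 be a real number, let λ be a real number, and let M be a finite set of integers such that for every m ∈ M both c ≤ |Lλ − m| and |λ − m/L| ≤ 1/2 hold. Then ∑_{m∈M} |F_L(λ − m/L)|² ≤ 1/c. -/
/-- The averaged geometric phase sum `F_L(x) = (1/L) ∑_{j=0}^{L-1} exp(2πi x j)`. -/
noncomputable def avgPhaseSum (L : ℕ) (x : ℝ) : ℂ :=
  (L : ℂ)⁻¹ * ∑ j ∈ Finset.range L, Complex.exp (2 * Real.pi * Complex.I * x * j)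

/-!
With `z = exp(2πix)`, the geometric sum gives `L · F_L(x) · (z - 1) = z^L - 1`, of norm at most
`2`, while Jordan's inequality gives `‖z - 1‖ = 2|sin πx| ≥ 4|x|` for `|x| ≤ 1/2`; hence
`|F_L(x)|² ≤ 1/(4(Lx)²)`. The integers `m` on one side of `Lλ` with `|Lλ - m| ≥ c` then
contribute at most `1/(c - 1/2) ≤ 2/c` to `∑ 1/(Lλ - m)²`, by comparing `1/d²` with the
telescoping difference `1/(d - 1/2) - 1/(d + 1/2)`.
-/

open Finset Real

lemma four_mul_abs_le_norm_exp_sub_one {x : ℝ} (hx : |x| ≤ 1 / 2) :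
    4 * |x| ≤ ‖Complex.exp (2 * π * Complex.I * x) - 1‖ := by
  have hjordan : 2 / π * |π * x| ≤ |sin (π * x)| :=
    mul_abs_le_abs_sin (by rw [abs_mul, abs_of_pos pi_pos]; nlinarith [pi_pos])
  rw [abs_mul, abs_of_pos pi_pos, ← mul_assoc, div_mul_cancel₀ _ pi_ne_zero] at hjordan
  rw [show 2 * π * Complex.I * x = Complex.I * ↑(2 * π * x) by push_cast; ring,
    Complex.norm_exp_I_mul_ofReal_sub_one, norm_mul, Real.norm_eq_abs, Real.norm_eq_abs, abs_two,
    show 2 * π * x / 2 = π * x by ring]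
  linarith

lemma natCast_mul_avgPhaseSum (L : ℕ) (x : ℝ) :
    (L : ℂ) * avgPhaseSum L x = ∑ j ∈ range L, Complex.exp (2 * π * Complex.I * x) ^ j := by
  rcases eq_or_ne L 0 with rfl | hL
  · simp
  rw [avgPhaseSum, mul_inv_cancel_left₀ (Nat.cast_ne_zero.mpr hL)]
  refine sum_congr rfl fun j _ => ?_
  rw [← Complex.exp_nat_mul]
  ring_nf

lemma two_mul_abs_mul_norm_avgPhaseSum_le (L : ℕ) {x : ℝ} (hx : |x| ≤ 1 / 2) :
    2 * |L * x| * ‖avgPhaseSum L x‖ ≤ 1 := by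
  have hz : ‖Complex.exp (2 * π * Complex.I * x)‖ = 1 := by
    rw [show 2 * π * Complex.I * x = ↑(2 * π * x) * Complex.I by push_cast; ring]
    exact Complex.norm_exp_ofReal_mul_I _
  have hden := four_mul_abs_le_norm_exp_sub_one hx
  set z := Complex.exp (2 * π * Complex.I * x)
  have hgeom : ‖(L : ℂ) * avgPhaseSum L x‖ * ‖z - 1‖ = ‖z ^ L - 1‖ := by
    rw [natCast_mul_avgPhaseSum, ← norm_mul, geom_sum_mul]
  have hnum : ‖z ^ L - 1‖ ≤ 2 := by
    calc ‖z ^ L - 1‖ ≤ ‖z ^ L‖ + ‖(1 : ℂ)‖ := norm_sub_le _ _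
      _ = 2 := by rw [norm_pow, hz]; norm_num
  rw [norm_mul, Complex.norm_natCast] at hgeom
  rw [abs_mul, Nat.abs_cast]
  have hprod := mul_le_mul_of_nonneg_left hden (by positivity : (0 : ℝ) ≤ L * ‖avgPhaseSum L x‖)
  nlinarith

lemma sq_norm_avgPhaseSum_le {L : ℕ} {x : ℝ} (hx : |x| ≤ 1 / 2) (hLx : L * x ≠ 0) :
    ‖avgPhaseSum L x‖ ^ 2 ≤ ((L * x) ^ 2)⁻¹ / 4 := by
  have h := two_mul_abs_mul_norm_avgPhaseSum_le L hx
  have hpos : 0 < |(L : ℝ) * x| := abs_pos.mpr hLx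
  rw [← sq_abs (L * x : ℝ), le_div_iff₀ (by norm_num), ← one_div, le_div_iff₀ (by positivity)]
  calc ‖avgPhaseSum L x‖ ^ 2 * 4 * |(L : ℝ) * x| ^ 2 = (2 * |L * x| * ‖avgPhaseSum L x‖) ^ 2 := by
        ring
    _ ≤ 1 := pow_le_one₀ (by positivity) h

lemma inv_sq_add_inv_add_half_le {d : ℝ} (hd : 1 / 2 < d) :
    (d ^ 2)⁻¹ + (d + 1 / 2)⁻¹ ≤ (d - 1 / 2)⁻¹ := by
  have h1 : 0 < d - 1 / 2 := by linarith
  rw [inv_eq_one_div, inv_eq_one_div, inv_eq_one_div, div_add_div _ _ (by positivity) (by positivity),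
    div_le_div_iff₀ (by positivity) h1]
  nlinarith

lemma sum_inv_sq_sub_le_of_le_sub {t u : ℝ} (hu : 1 / 2 < u) {S : Finset ℤ}
    (hS : ∀ m ∈ S, u ≤ m - t) : ∑ m ∈ S, (((m : ℝ) - t) ^ 2)⁻¹ ≤ (u - 1 / 2)⁻¹ := by
  induction S using Finset.induction_on_min generalizing u with
  | empty => simpa using (sub_pos.mpr hu).le
  | insert a s has ih =>
    have ha : u ≤ a - t := hS a (mem_insert_self a s)
    have hs : ∀ m ∈ s, (a : ℝ) - t + 1 ≤ m - t := fun m hm => by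
      have hsucc : (a : ℝ) + 1 ≤ m := by exact_mod_cast (has m hm : a + 1 ≤ m)
      linarith
    rw [sum_insert fun h => lt_irrefl a (has a h)]
    calc ((a - t) ^ 2)⁻¹ + ∑ m ∈ s, (((m : ℝ) - t) ^ 2)⁻¹
        ≤ ((a - t) ^ 2)⁻¹ + (a - t + 1 / 2)⁻¹ := by
          gcongr
          exact (ih (by linarith) hs).trans_eq (by congr 1; ring)
      _ ≤ (a - t - 1 / 2)⁻¹ := inv_sq_add_inv_add_half_le (by linarith)
      _ ≤ (u - 1 / 2)⁻¹ := by gcongr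

lemma sum_inv_sq_sub_le_of_le_abs {t c : ℝ} (hc : 1 ≤ c) {S : Finset ℤ}
    (hS : ∀ m ∈ S, c ≤ |t - m|) : ∑ m ∈ S, ((t - m) ^ 2)⁻¹ ≤ 4 / c := by
  have hside : (c - 1 / 2)⁻¹ ≤ 2 / c := by
    rw [inv_eq_one_div, div_le_div_iff₀ (by linarith) (by linarith)]; linarith
  have hright : ∑ m ∈ S.filter (fun m : ℤ => t < m), ((t - m) ^ 2)⁻¹ ≤ 2 / c := by
    simp_rw [sub_sq_comm t]
    refine (sum_inv_sq_sub_le_of_le_sub (by linarith) fun m hm => ?_).trans hside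
    rw [mem_filter] at hm
    rw [← abs_of_pos (sub_pos.mpr hm.2), abs_sub_comm]
    exact hS m hm.1
  have hleft : ∑ m ∈ S.filter (fun m : ℤ => ¬ t < m), ((t - m) ^ 2)⁻¹ ≤ 2 / c := by
    have hreflect : ∑ m ∈ S.filter (fun m : ℤ => ¬ t < m), ((t - m) ^ 2)⁻¹
        = ∑ m ∈ (S.filter (fun m : ℤ => ¬ t < m)).image Neg.neg, (((m : ℝ) - -t) ^ 2)⁻¹ := by
      rw [sum_image neg_injective.injOn]
      refine sum_congr rfl fun m _ => ?_
      push_cast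
      ring
    rw [hreflect]
    refine (sum_inv_sq_sub_le_of_le_sub (by linarith) fun m hm => ?_).trans hside
    obtain ⟨m, hmS, rfl⟩ := mem_image.mp hm
    rw [mem_filter, not_lt] at hmS
    have hdist := hS m hmS.1
    rw [abs_of_nonneg (sub_nonneg.mpr hmS.2)] at hdist
    push_cast
    linarith
  calc ∑ m ∈ S, ((t - m) ^ 2)⁻¹
      = ∑ m ∈ S.filter (fun m : ℤ => t < m), ((t - m) ^ 2)⁻¹
        + ∑ m ∈ S.filter (fun m : ℤ => ¬ t < m), ((t - m) ^ 2)⁻¹ :=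
          (sum_filter_add_sum_filter_not S _ _).symm
    _ ≤ 2 / c + 2 / c := add_le_add hright hleft
    _ = 4 / c := by ring

/-- Almost-zero property: if every `m ∈ M` satisfies `c ≤ |Lλ − m|` and `|λ − m/L| ≤ 1/2`,
then `∑_{m∈M} |F_L(λ − m/L)|² ≤ 1/c`. -/
theorem sum_abs_avgPhaseSum_sq_le (L : ℕ) (hL : 0 < L) (c : ℝ) (hc : 1 ≤ c)
    (lam : ℝ) (M : Finset ℤ)
    (hM : ∀ m ∈ M, c ≤ |(L : ℝ) * lam - m| ∧ |lam - (m : ℝ) / L| ≤ 1 / 2) :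
    ∑ m ∈ M, (‖avgPhaseSum L (lam - (m : ℝ) / L)‖) ^ 2 ≤ 1 / c := by
  have hrescale (m : ℤ) : (L : ℝ) * (lam - m / L) = L * lam - m := by
    field_simp [(Nat.cast_pos.mpr hL).ne']
  calc ∑ m ∈ M, ‖avgPhaseSum L (lam - m / L)‖ ^ 2
      ≤ ∑ m ∈ M, (((L : ℝ) * lam - m) ^ 2)⁻¹ / 4 := sum_le_sum fun m hm => by
        have hLx : (L : ℝ) * (lam - m / L) ≠ 0 := by
          rw [hrescale, ← abs_pos]
          linarith [(hM m hm).1]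
        simpa only [hrescale] using sq_norm_avgPhaseSum_le (hM m hm).2 hLx
    _ = (∑ m ∈ M, (((L : ℝ) * lam - m) ^ 2)⁻¹) / 4 := (sum_div _ _ _).symm
    _ ≤ 4 / c / 4 := by gcongr; exact sum_inv_sq_sub_le_of_le_abs hc fun m hm => (hM m hm).1
    _ = 1 / c := by ring
end

section
/- Let n be a positive integer and work with n×n complex matrices acting on EuclideanSpace ℂ (Fin n). Let Ψ be a unit vector, let N be a matrix with operator norm ‖N‖ ≤ 1 and ⟨Ψ, N Ψ⟩ = 0, and let Q be a Hermitian matrix with 0 ⪯ Q ⪯ I. Then |⟨Ψ, Q N Q Ψ⟩| ≤ 2·‖Ψ − Q Ψ‖ ≤ 2·√(1 − Re⟨Ψ, Q Ψ⟩). -/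
/-!
Put `φ = QΨ`. Since `Q` is self-adjoint, `⟨Ψ, QNQΨ⟩ = ⟨φ, Nφ⟩`, and this differs from
`⟨Ψ, NΨ⟩ = 0` by at most `‖N‖ ‖φ - Ψ‖ (‖Ψ‖ + ‖φ‖) ≤ 2 ‖Ψ - φ‖`, because `0 ⪯ Q ⪯ I` makes `Q` a
contraction. The same hypothesis gives `Q² ⪯ Q`, i.e. `‖QΨ‖² ≤ Re⟨Ψ, QΨ⟩`, and expanding
`‖Ψ - QΨ‖²` then yields `‖Ψ - QΨ‖² ≤ 1 - Re⟨Ψ, QΨ⟩`.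
-/

open scoped ComplexOrder
/-- Loewner order for complex matrices: `A ⪯ B` iff `B − A` is positive semidefinite. -/
def Matrix.loewnerLE {n : ℕ} (A B : Matrix (Fin n) (Fin n) ℂ) : Prop :=
  (B - A).PosSemidef

open scoped InnerProductSpace

section

variable {𝕜 E : Type*} [RCLike 𝕜] [NormedAddCommGroup E] [InnerProductSpace 𝕜 E]

namespace LinearMap

/-- The vector form of `T - T² = T (1 - T) T + (1 - T) T (1 - T)`. -/
theorem inner_apply_sub_add_inner_one_sub_apply {T : E →ₗ[𝕜] E} (hT : T.IsSymmetric) (x : E) :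
    ⟪T (x - T x), x - T x⟫_𝕜 + ⟪(1 - T) (T x), T x⟫_𝕜 = ⟪T x, x⟫_𝕜 - ⟪T x, T x⟫_𝕜 :=
  calc ⟪T (x - T x), x - T x⟫_𝕜 + ⟪(1 - T) (T x), T x⟫_𝕜
      = ⟪T x - T (T x), x - T x⟫_𝕜 + ⟪T x - T (T x), T x⟫_𝕜 := by simp
    _ = ⟪T x - T (T x), x⟫_𝕜 := by rw [← inner_add_right, sub_add_cancel]
    _ = ⟪T x, x⟫_𝕜 - ⟪T x, T x⟫_𝕜 := by rw [inner_sub_left, hT (T x) x]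

variable {T : E →ₗ[𝕜] E}

theorem norm_apply_sq_le_re_inner (h0 : 0 ≤ T) (h1 : T ≤ 1) (x : E) :
    ‖T x‖ ^ 2 ≤ RCLike.re ⟪x, T x⟫_𝕜 := by
  rw [nonneg_iff_isPositive] at h0
  have hdiff := congrArg RCLike.re (inner_apply_sub_add_inner_one_sub_apply h0.isSymmetric x)
  rw [AddMonoidHom.map_add, AddMonoidHom.map_sub, inner_re_symm (T x) x,
    ← norm_sq_eq_re_inner] at hdiff
  linarith [h0.re_inner_nonneg_left (x - T x), h1.re_inner_nonneg_left (T x)]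

theorem norm_apply_le_of_nonneg_of_le_one (h0 : 0 ≤ T) (h1 : T ≤ 1) (x : E) :
    ‖T x‖ ≤ ‖x‖ := by
  have h : ‖T x‖ ^ 2 ≤ ‖x‖ * ‖T x‖ := (norm_apply_sq_le_re_inner h0 h1 x).trans
    ((RCLike.re_le_norm _).trans (norm_inner_le_norm x (T x)))
  nlinarith [norm_nonneg x, norm_nonneg (T x)]

theorem norm_sub_apply_sq_le (h0 : 0 ≤ T) (h1 : T ≤ 1) (x : E) :
    ‖x - T x‖ ^ 2 ≤ ‖x‖ ^ 2 - RCLike.re ⟪x, T x⟫_𝕜 := by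
  rw [@norm_sub_sq 𝕜]
  linarith [norm_apply_sq_le_re_inner h0 h1 x]

end LinearMap

theorem ContinuousLinearMap.norm_inner_apply_self_sub_le (T : E →L[𝕜] E) (x y : E) :
    ‖⟪y, T y⟫_𝕜 - ⟪x, T x⟫_𝕜‖ ≤ ‖T‖ * ‖y - x‖ * (‖x‖ + ‖y‖) := by
  have hsplit : ⟪y, T y⟫_𝕜 - ⟪x, T x⟫_𝕜 = ⟪y - x, T y⟫_𝕜 + ⟪x, T (y - x)⟫_𝕜 := by
    simp only [inner_sub_left, map_sub, inner_sub_right]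
    ring
  calc ‖⟪y, T y⟫_𝕜 - ⟪x, T x⟫_𝕜‖
      ≤ ‖y - x‖ * ‖T y‖ + ‖x‖ * ‖T (y - x)‖ := by
        rw [hsplit]
        exact (norm_add_le _ _).trans
          (add_le_add (norm_inner_le_norm _ _) (norm_inner_le_norm _ _))
    _ ≤ ‖y - x‖ * (‖T‖ * ‖y‖) + ‖x‖ * (‖T‖ * ‖y - x‖) := by
        gcongr <;> exact T.le_opNorm _
    _ = ‖T‖ * ‖y - x‖ * (‖x‖ + ‖y‖) := by ring

end

theorem Matrix.loewnerLE_iff_toEuclideanLin_le {n : ℕ} (A B : Matrix (Fin n) (Fin n) ℂ) :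
    Matrix.loewnerLE A B ↔ Matrix.toEuclideanLin A ≤ Matrix.toEuclideanLin B := by
  rw [LinearMap.le_def, ← map_sub, Matrix.isPositive_toEuclideanLin_iff, Matrix.loewnerLE]

theorem off_eigenvector_contribution_general (n : ℕ)
    (Ψ : EuclideanSpace ℂ (Fin n)) (hΨ : ‖Ψ‖ = 1)
    (N Q : Matrix (Fin n) (Fin n) ℂ)
    (hN : ‖(Matrix.toEuclideanLin N).toContinuousLinearMap‖ ≤ 1)
    (hNΨ : (inner ℂ Ψ (Matrix.toEuclideanLin N Ψ) : ℂ) = 0)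
    (hQ0 : Matrix.loewnerLE 0 Q) (hQ1 : Matrix.loewnerLE Q 1) :
    ‖(inner ℂ Ψ (Matrix.toEuclideanLin (Q * N * Q) Ψ) : ℂ)‖
        ≤ 2 * ‖Ψ - Matrix.toEuclideanLin Q Ψ‖ ∧
      2 * ‖Ψ - Matrix.toEuclideanLin Q Ψ‖
        ≤ 2 * Real.sqrt (1 - (inner ℂ Ψ (Matrix.toEuclideanLin Q Ψ) : ℂ).re) := by
  set T := Matrix.toEuclideanLin Q
  set N' := (Matrix.toEuclideanLin N).toContinuousLinearMap
  have hT0 : 0 ≤ T := by simpa using (Matrix.loewnerLE_iff_toEuclideanLin_le 0 Q).1 hQ0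
  have hT1 : T ≤ 1 := by
    simpa [Module.End.one_eq_id] using (Matrix.loewnerLE_iff_toEuclideanLin_le Q 1).1 hQ1
  have hconj : ⟪Ψ, Matrix.toEuclideanLin (Q * N * Q) Ψ⟫_ℂ = ⟪T Ψ, N' (T Ψ)⟫_ℂ := by
    have hmul : Matrix.toEuclideanLin (Q * N * Q) Ψ = T (N' (T Ψ)) := by simp [T, N']
    rw [hmul, ← ((LinearMap.nonneg_iff_isPositive T).1 hT0).isSymmetric]
  constructor
  · calc ‖⟪Ψ, Matrix.toEuclideanLin (Q * N * Q) Ψ⟫_ℂ‖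
        = ‖⟪T Ψ, N' (T Ψ)⟫_ℂ - ⟪Ψ, N' Ψ⟫_ℂ‖ := by rw [hconj]; simp [N', hNΨ]
      _ ≤ ‖N'‖ * ‖T Ψ - Ψ‖ * (‖Ψ‖ + ‖T Ψ‖) := N'.norm_inner_apply_self_sub_le Ψ (T Ψ)
      _ ≤ 1 * ‖Ψ - T Ψ‖ * (1 + 1) := by
        rw [norm_sub_rev, hΨ]
        gcongr
        exact hΨ ▸ LinearMap.norm_apply_le_of_nonneg_of_le_one hT0 hT1 Ψ
      _ = 2 * ‖Ψ - T Ψ‖ := by ring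
  · gcongr
    refine Real.le_sqrt_of_sq_le ?_
    simpa [hΨ] using LinearMap.norm_sub_apply_sq_le hT0 hT1 Ψ

/-- If `‖N‖ ≤ 1`, `⟨Ψ, NΨ⟩ = 0` and `0 ⪯ Q ⪯ I`, then
`|⟨Ψ, QNQ Ψ⟩| ≤ 2‖Ψ − QΨ‖ ≤ 2√(1 − Re⟨Ψ, QΨ⟩)`. -/
theorem off_eigenvector_contribution (n : ℕ) (hn : 0 < n)
    (Ψ : EuclideanSpace ℂ (Fin n)) (hΨ : ‖Ψ‖ = 1)
    (N Q : Matrix (Fin n) (Fin n) ℂ)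
    (hN : ‖(Matrix.toEuclideanLin N).toContinuousLinearMap‖ ≤ 1)
    (hNΨ : (inner ℂ Ψ (Matrix.toEuclideanLin N Ψ) : ℂ) = 0)
    (hQ : Q.IsHermitian) (hQ0 : Matrix.loewnerLE 0 Q) (hQ1 : Matrix.loewnerLE Q 1) :
    ‖(inner ℂ Ψ (Matrix.toEuclideanLin (Q * N * Q) Ψ) : ℂ)‖
        ≤ 2 * ‖Ψ - Matrix.toEuclideanLin Q Ψ‖ ∧
      2 * ‖Ψ - Matrix.toEuclideanLin Q Ψ‖
        ≤ 2 * Real.sqrt (1 - (inner ℂ Ψ (Matrix.toEuclideanLin Q Ψ) : ℂ).re) :=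
  off_eigenvector_contribution_general n Ψ hΨ N Q hN hNΨ hQ0 hQ1
end
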